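/- arXiv:2302.04086 — 2 statements merged into one kernel-verified Lean document; each statement's English description precedes it below -/
import Mathlib

section
/- Let T₁,…,T_m be real n₁×n₂ matrices, μ a unit pure quaternion, and ω = exp(−2πμ/m). Then (F_μ ⊗ I_{n₁})·bcirc(T)·(F_μᴴ ⊗ I_{n₂}) = Bdiag(D₁,…,D_m), a block diagonal matrix whose blocks are D_{s+1} = Σ_{p=0}^{m−1} ω^{sp} T_{p+1} for s = 0,…,m−1; equivalently, its scalar entry at row (s,i), column (t,j) is 0 when s ≠ t and equals Σ_{p=0}^{m−1} ω^{sp} (T_{p+1})_{ij} when s = t. -/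
/-!
Only powers of `ω` and real scalars occur in the product, and these commute with each other, so
the classical computation for the complex DFT goes through verbatim in the division ring `ℍ`:
after the substitution `u = p + v` the double sum factors into `∑ₚ ω^{sp} Tₚ` times the
orthogonality sum `∑ᵥ ω^{sv} ω^{-tv} = m δₛₜ`. The latter needs `ω` to have order exactly `m`,
which is transported from `exp(-2πi/m) ∈ ℂ` along the embedding `ℂ → ℍ` sending `i` to `μ`;
and `ω⋆ = ω⁻¹` because `μ⋆ = -μ`.
-/

open Quaternion Matrix Kronecker

/-- `ω = exp(−2πμ/m)`, the quaternion exponential of `(−2π/m)·μ`. -/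
noncomputable def qomega (m : ℕ) (μ : ℍ[ℝ]) : ℍ[ℝ] :=
  NormedSpace.exp ((-(2 * Real.pi) / m : ℝ) • μ)

/-- The `m×m` discrete quaternion Fourier transform matrix,
`(F_μ)_{uv} = (1/√m)·ω^{uv}`. -/
noncomputable def qdft (m : ℕ) (μ : ℍ[ℝ]) : Matrix (Fin m) (Fin m) ℍ[ℝ] :=
  Matrix.of fun u v => ((Real.sqrt m)⁻¹ : ℝ) • (qomega m μ) ^ ((u : ℕ) * (v : ℕ))

/-- The block circulant matrix of the frontal slices `T₁, …, T_m`: its `(s,t)` block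
(0-indexed) is `T_{((s−t) mod m)+1}`. -/
noncomputable def bcirc {m n₁ n₂ : ℕ} (T : Fin m → Matrix (Fin n₁) (Fin n₂) ℍ[ℝ]) :
    Matrix (Fin m × Fin n₁) (Fin m × Fin n₂) ℍ[ℝ] :=
  Matrix.of fun p q => T (p.1 - q.1) p.2 q.2

section DivisionRing

variable {D : Type*} [DivisionRing D] {ω : D} {m : ℕ}

theorem sum_pow_mul_inv_pow_of_orderOf_eq (hω : orderOf ω = m) (s t : Fin m) :
    ∑ v : Fin m, ω ^ ((s : ℕ) * v) * ω⁻¹ ^ ((t : ℕ) * v) = if s = t then (m : D) else 0 := by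
  have hω0 : ω ≠ 0 := (orderOf_pos_iff.mp (hω ▸ s.pos)).isUnit.ne_zero
  set x := ω ^ (s : ℕ) * (ω ^ (t : ℕ))⁻¹
  have hcomm : Commute (ω ^ (s : ℕ)) (ω ^ (t : ℕ))⁻¹ := ((Commute.refl ω).pow_pow _ _).inv_right₀
  have hterm (v : ℕ) : ω ^ ((s : ℕ) * v) * ω⁻¹ ^ ((t : ℕ) * v) = x ^ v := by
    rw [hcomm.mul_pow, pow_mul, pow_mul, inv_pow]
  simp only [hterm, Fin.sum_univ_eq_sum_range (x ^ ·)]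
  split_ifs with hst
  · simp [x, hst, pow_ne_zero _ hω0]
  · have hx : x ≠ 1 := by
      rw [Ne, mul_inv_eq_one₀ (pow_ne_zero _ hω0)]
      exact fun h => hst (Fin.ext (pow_injOn_Iio_orderOf (hω ▸ s.isLt) (hω ▸ t.isLt) h))
    have hxm : x ^ m = 1 := by
      rw [hcomm.mul_pow, ← pow_mul, inv_pow, ← pow_mul, pow_mul', pow_mul' _ (t : ℕ),
        show ω ^ m = 1 from hω ▸ pow_orderOf_eq_one ω, one_pow, one_pow, inv_one, one_mul]
    rw [geom_sum_eq hx, hxm, sub_self, zero_div]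

theorem sum_sum_pow_mul_sub_mul_inv_pow_of_orderOf_eq [NeZero m] (hω : orderOf ω = m)
    (a : Fin m → D) (ha : ∀ k, Commute ω (a k)) (s t : Fin m) :
    ∑ v : Fin m, ∑ u : Fin m, ω ^ ((s : ℕ) * u) * a (u - v) * ω⁻¹ ^ ((t : ℕ) * v) =
      if s = t then (m : D) * ∑ k : Fin m, ω ^ ((s : ℕ) * k) * a k else 0 := by
  have hsplit (p v : Fin m) :
      ω ^ ((s : ℕ) * (p + v : Fin m)) = ω ^ ((s : ℕ) * p) * ω ^ ((s : ℕ) * v) := by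
    rw [← pow_add, ← mul_add, (orderOf_pos_iff.mp (hω ▸ s.pos)).pow_eq_pow_iff_modEq, hω,
      Fin.val_add]
    exact (Nat.mod_modEq _ _).mul_left _
  calc ∑ v : Fin m, ∑ u : Fin m, ω ^ ((s : ℕ) * u) * a (u - v) * ω⁻¹ ^ ((t : ℕ) * v)
      = ∑ v : Fin m, ∑ p : Fin m,
          ω ^ ((s : ℕ) * p) * a p * (ω ^ ((s : ℕ) * v) * ω⁻¹ ^ ((t : ℕ) * v)) := by
        refine Finset.sum_congr rfl fun v _ => ?_
        rw [← Equiv.sum_comp (Equiv.addRight v)]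
        refine Finset.sum_congr rfl fun p _ => ?_
        rw [Equiv.coe_addRight, add_sub_cancel_right, hsplit, mul_assoc (ω ^ _),
          ((ha p).pow_left _).eq]
        simp only [mul_assoc]
    _ = (∑ p : Fin m, ω ^ ((s : ℕ) * p) * a p) *
          ∑ v : Fin m, ω ^ ((s : ℕ) * v) * ω⁻¹ ^ ((t : ℕ) * v) := by
        rw [Finset.sum_comm, Finset.sum_mul_sum]
    _ = _ := by
        rw [sum_pow_mul_inv_pow_of_orderOf_eq hω]
        split_ifs <;> simp [Nat.cast_comm]

end DivisionRing

namespace Quaternion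

theorem mul_self_eq_neg_one_of_re_eq_zero {μ : ℍ[ℝ]} (hpure : μ.re = 0) (hunit : ‖μ‖ = 1) :
    μ * μ = -1 := by
  rw [← sq, sq_eq_neg_normSq.mpr hpure, normSq_eq_norm_mul_self, hunit, mul_one, coe_one]

end Quaternion

theorem star_qomega (m : ℕ) {μ : ℍ[ℝ]} (hpure : μ.re = 0) :
    star (qomega m μ) = (qomega m μ)⁻¹ := by
  rw [qomega, NormedSpace.star_exp, Quaternion.star_smul, Quaternion.star_eq_neg.mpr hpure,
    smul_neg, NormedSpace.exp_neg_of_mem_ball ℝ]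
  rw [NormedSpace.expSeries_radius_eq_top]
  exact edist_lt_top _ _

theorem qomega_eq_liftAux_exp (m : ℕ) {μ : ℍ[ℝ]} (hμ : μ * μ = -1) :
    qomega m μ = Complex.liftAux μ hμ (Complex.exp ((-(2 * Real.pi) / m : ℝ) • Complex.I)) := by
  set φ := Complex.liftAux μ hμ
  rw [Complex.exp_eq_exp_ℂ, NormedSpace.map_exp φ φ.toLinearMap.continuous_of_finiteDimensional,
    map_smul, Complex.liftAux_apply_I, qomega]

theorem orderOf_qomega {m : ℕ} (hm : m ≠ 0) {μ : ℍ[ℝ]} (hpure : μ.re = 0) (hunit : ‖μ‖ = 1) :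
    orderOf (qomega m μ) = m := by
  have hμ := Quaternion.mul_self_eq_neg_one_of_re_eq_zero hpure hunit
  have hζ : Complex.exp ((-(2 * Real.pi) / m : ℝ) • Complex.I) =
      (Complex.exp (2 * Real.pi * Complex.I / m))⁻¹ := by
    rw [← Complex.exp_neg, Complex.real_smul]
    push_cast
    ring_nf
  set φ := Complex.liftAux μ hμ
  rw [qomega_eq_liftAux_exp m hμ, hζ]
  exact (orderOf_injective (φ : ℂ →* ℍ[ℝ]) φ.toRingHom.injective _).trans
    (Complex.isPrimitiveRoot_exp m hm).inv.eq_orderOf.symm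

/-- for real frontal slices `T₁,…,T_m`, a unit pure quaternion `μ` and
`ω = exp(−2πμ/m)`, `(F_μ ⊗ I)·bcirc(T)·(F_μᴴ ⊗ I)` is block diagonal with blocks
`D_{s+1} = Σ_{p} ω^{sp} T_{p+1}`: its scalar entry at row `(s,i)`, column `(t,j)` is `0`
when `s ≠ t` and equals `Σ_{p} ω^{sp} (T_{p+1})_{ij}` when `s = t`. -/
theorem qdft_block_diagonalizes_real_bcirc (m n₁ n₂ : ℕ) (hm : 1 ≤ m) (μ : ℍ[ℝ])
    (hpure : μ.re = 0) (hunit : ‖μ‖ = 1) (T : Fin m → Matrix (Fin n₁) (Fin n₂) ℝ) :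
    (qdft m μ ⊗ₖ (1 : Matrix (Fin n₁) (Fin n₁) ℍ[ℝ]))
        * bcirc (fun t => (T t).map fun x => ((x : ℝ) : ℍ[ℝ]))
        * ((qdft m μ)ᴴ ⊗ₖ (1 : Matrix (Fin n₂) (Fin n₂) ℍ[ℝ])) =
      Matrix.of fun p q =>
        if p.1 = q.1 then
          ∑ k : Fin m, (qomega m μ) ^ ((p.1 : ℕ) * (k : ℕ)) * ((T k p.2 q.2 : ℝ) : ℍ[ℝ])
        else 0 := by
  have hm0 : m ≠ 0 := by omega
  have : NeZero m := ⟨hm0⟩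
  have hc : (Real.sqrt m)⁻¹ * (Real.sqrt m)⁻¹ = (m : ℝ)⁻¹ := by
    rw [← mul_inv, Real.mul_self_sqrt m.cast_nonneg]
  refine Matrix.ext fun ⟨s, i⟩ ⟨t, j⟩ => ?_
  simp only [mul_apply, qdft, bcirc, kroneckerMap_apply, of_apply, conjTranspose_apply, one_apply,
    map_apply, Fintype.sum_prod_type, mul_ite, ite_mul, mul_zero, zero_mul, mul_one,
    Finset.sum_ite_eq, Finset.sum_ite_eq', Finset.mem_univ, if_true, Finset.sum_mul]
  have hterm (u v : Fin m) :
      (Real.sqrt m)⁻¹ • qomega m μ ^ ((s : ℕ) * u) * ((T (u - v) i j : ℝ) : ℍ[ℝ]) *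
        star ((Real.sqrt m)⁻¹ • qomega m μ ^ ((t : ℕ) * v)) =
        (m : ℝ)⁻¹ • (qomega m μ ^ ((s : ℕ) * u) * ((T (u - v) i j : ℝ) : ℍ[ℝ]) *
          (qomega m μ)⁻¹ ^ ((t : ℕ) * v)) := by
    rw [Quaternion.star_smul, star_pow, star_qomega m hpure, smul_mul_assoc, smul_mul_assoc,
      mul_smul_comm, smul_smul, hc]
  simp only [hterm, ← Finset.smul_sum]
  rw [sum_sum_pow_mul_sub_mul_inv_pow_of_orderOf_eq (orderOf_qomega hm0 hpure hunit)
    (fun k => ((T k i j : ℝ) : ℍ[ℝ])) fun k => (Quaternion.coe_commutes _ _).symm]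
  split_ifs
  · rw [← nsmul_eq_mul, ← Nat.cast_smul_eq_nsmul ℝ, inv_smul_smul₀ (by positivity)]
  · exact smul_zero _
end

section
/- Let (μ, α, β) be a three-axis system, let T⁽⁰⁾, T⁽¹⁾, T⁽²⁾, T⁽³⁾ each be a family of m real n₁×n₂ matrices, and let T have frontal slices T_t = T⁽⁰⁾_t + T⁽¹⁾_t μ + T⁽²⁾_t α + T⁽³⁾_t β. With ω = exp(−2πμ/m), (F_μ ⊗ I_{n₁})·bcirc(T)·(F_μᴴ ⊗ I_{n₂}) = Bdiag(D⁽⁰⁾) + Bdiag(D⁽¹⁾)μ + Bdiag(D⁽²⁾)Zα + Bdiag(D⁽³⁾)Zβ, where for each l the block D⁽ˡ⁾_{s+1} = Σ_{p=0}^{m−1} ω^{sp} T⁽ˡ⁾_{p+1}, Z = A ⊗ I_{n₂} with A the m×m flip permutation matrix, and the quaternion scalars μ, α, β multiply on the right. -/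
open Quaternion Matrix Kronecker

/-- The dot product of two quaternions. -/
noncomputable def dotQ (a b : ℍ[ℝ]) : ℝ :=
  a.re * b.re + a.imI * b.imI + a.imJ * b.imJ + a.imK * b.imK

/-- A three-axis system `(μ, α, β)`. -/
structure ThreeAxis (μ α β : ℍ[ℝ]) : Prop where
  μ_pure : μ.re = 0
  μ_unit : ‖μ‖ = 1
  α_pure : α.re = 0
  α_unit : ‖α‖ = 1
  orth : dotQ μ α = 0
  β_eq : β = μ * α

/-- The `m×m` flip permutation matrix `A`, with `A_{st} = 1` iff `s + t ≡ 0 (mod m)`. -/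
noncomputable def flipMat (m : ℕ) : Matrix (Fin m) (Fin m) ℍ[ℝ] :=
  Matrix.of fun s t => if ((s : ℕ) + (t : ℕ)) % m = 0 then 1 else 0

/-- Right multiplication of every entry of a matrix by a quaternion scalar. -/
noncomputable def mulRight {I J : Type*} (M : Matrix I J ℍ[ℝ]) (q : ℍ[ℝ]) :
    Matrix I J ℍ[ℝ] :=
  Matrix.of fun i j => M i j * q

/-- `Bdiag(D⁽ˡ⁾)`: the block diagonal matrix whose `s`-th diagonal block is
`D⁽ˡ⁾_{s+1} = Σ_{p=0}^{m−1} ω^{sp} T⁽ˡ⁾_{p+1}` for real slices `T⁽ˡ⁾`. -/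
noncomputable def bdiagD {m n₁ n₂ : ℕ} (μ : ℍ[ℝ]) (T : Fin m → Matrix (Fin n₁) (Fin n₂) ℝ) :
    Matrix (Fin m × Fin n₁) (Fin m × Fin n₂) ℍ[ℝ] :=
  Matrix.of fun p q =>
    if p.1 = q.1 then
      ∑ k : Fin m, (qomega m μ) ^ ((p.1 : ℕ) * (k : ℕ)) * ((T k p.2 q.2 : ℝ) : ℍ[ℝ])
    else 0

/-!
Since `μ² = -1`, `φ : z ↦ Re z + (Im z) μ` embeds `ℂ` into `ℍ` as an `ℝ`-algebra, and `ω` is the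
image of the primitive root `ρ = e^{-2πi/m}`. Every slice entry is `φ(g₀) + φ(g₂) α` with
`g₀ = T⁽⁰⁾ + T⁽¹⁾ i` and `g₂ = T⁽²⁾ + T⁽³⁾ i`. As `α` anticommutes with `μ`, moving the right
Fourier factor `φ(conj ρ^{vt})` past `α` conjugates it. So the `φ(g₀)`-part is an ordinary complex
circulant, diagonalised by the DFT (`Σₜ (ρ^u conj ρ^v)^t = m δ_{u,v}`), whereas in the `α`-part
the factors `ρ^{us}` and `ρ^{vt}` meet unconjugated and `Σₜ ρ^{(u+v)t} = m δ_{u+v ≡ 0}` produces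
the flip.
-/

theorem Quaternion.mul_self_eq_neg_one {μ : ℍ[ℝ]} (hre : μ.re = 0) (hnorm : ‖μ‖ = 1) :
    μ * μ = -1 := by
  rw [← sq, sq_eq_neg_normSq.mpr hre, normSq_eq_norm_mul_self, hnorm]
  norm_num

theorem Quaternion.mul_eq_neg_mul_of_dotQ_eq_zero {μ α : ℍ[ℝ]} (hμ : μ.re = 0) (hα : α.re = 0)
    (horth : dotQ μ α = 0) : α * μ = -(μ * α) := by
  rw [dotQ, hμ, hα] at horth
  ext <;> simp [hμ, hα] <;> linarith

section RootsOfUnity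

variable {R : Type*} [CommRing R] {m : ℕ}

theorem sum_fin_pow_eq_ite [IsDomain R] [DecidableEq R] {x : R} (hx : x ^ m = 1) :
    ∑ t : Fin m, x ^ (t : ℕ) = if x = 1 then (m : R) else 0 := by
  rw [Fin.sum_univ_eq_sum_range (x ^ ·) m]
  split_ifs with h1
  · simp [h1]
  · have h := geom_sum_mul x m
    rw [hx, sub_self] at h
    exact (mul_eq_zero.mp h).resolve_right (sub_ne_zero.mpr h1)

theorem sum_sum_pow_mul_sub_mul_pow [NeZero m] {ζ : R} (hζ : ζ ^ m = 1) (u : ℕ)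
    (f : Fin m → R) (ξ : R) :
    ∑ s : Fin m, ∑ t : Fin m, ζ ^ (u * s) * f (s - t) * ξ ^ (t : ℕ)
      = (∑ p : Fin m, ζ ^ (u * p) * f p) * ∑ t : Fin m, (ζ ^ u * ξ) ^ (t : ℕ) := by
  have hshift (p t : Fin m) : ζ ^ (u * ↑(p + t)) = ζ ^ (u * p) * (ζ ^ u) ^ (t : ℕ) := by
    rw [pow_mul, Fin.val_add, ← pow_eq_pow_mod _ (by rw [pow_right_comm, hζ, one_pow]), pow_add,
      pow_mul]
  calc ∑ s : Fin m, ∑ t : Fin m, ζ ^ (u * s) * f (s - t) * ξ ^ (t : ℕ)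
      = ∑ t : Fin m, ∑ p : Fin m, ζ ^ (u * ↑(p + t)) * f p * ξ ^ (t : ℕ) := by
        rw [Finset.sum_comm]
        exact Finset.sum_congr rfl fun t _ =>
          Fintype.sum_equiv (Equiv.subRight t) _ _ fun s => by simp
    _ = _ := by
        rw [Finset.sum_mul_sum, Finset.sum_comm]
        simp only [hshift, mul_pow]
        exact Finset.sum_congr rfl fun _ _ => Finset.sum_congr rfl fun _ _ => by ring

theorem IsPrimitiveRoot.sum_fin_pow_mul_pow [IsDomain R] {ζ : R} (hζ : IsPrimitiveRoot ζ m)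
    (u v : ℕ) : ∑ t : Fin m, (ζ ^ u * ζ ^ v) ^ (t : ℕ) = if m ∣ u + v then (m : R) else 0 := by
  classical
  rw [← pow_add, sum_fin_pow_eq_ite (by rw [pow_right_comm, hζ.pow_eq_one, one_pow])]
  exact if_congr (hζ.pow_eq_one_iff_dvd _) rfl rfl

theorem IsPrimitiveRoot.sum_fin_pow_mul_inv_pow {K : Type*} [Field K] {ζ : K}
    (hζ : IsPrimitiveRoot ζ m) (u v : Fin m) :
    ∑ t : Fin m, (ζ ^ (u : ℕ) * (ζ ^ (v : ℕ))⁻¹) ^ (t : ℕ) = if u = v then (m : K) else 0 := by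
  classical
  have hv : ζ ^ (v : ℕ) ≠ 0 := pow_ne_zero _ (hζ.ne_zero u.pos.ne')
  rw [sum_fin_pow_eq_ite (by rw [mul_pow, inv_pow, pow_right_comm, hζ.pow_eq_one, pow_right_comm,
    hζ.pow_eq_one, one_pow, one_pow, inv_one, one_mul])]
  refine if_congr ?_ rfl rfl
  rw [mul_inv_eq_one₀ hv]
  exact ⟨fun h => Fin.ext (hζ.pow_inj u.isLt v.isLt h), fun h => h ▸ rfl⟩

end RootsOfUnity

noncomputable def complexOmega (m : ℕ) : ℂ := (Complex.exp (2 * Real.pi * Complex.I / m))⁻¹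

theorem isPrimitiveRoot_complexOmega {m : ℕ} (hm : m ≠ 0) :
    IsPrimitiveRoot (complexOmega m) m :=
  (Complex.isPrimitiveRoot_exp m hm).inv

noncomputable def complexDFT {m : ℕ} (g : Fin m → ℂ) (u : Fin m) : ℂ :=
  ∑ p : Fin m, complexOmega m ^ ((u : ℕ) * p) * g p

theorem complexDFT_ofReal_add_ofReal_mul_I {m : ℕ} (a b : Fin m → ℝ) (u : Fin m) :
    complexDFT (fun p => a p + b p * Complex.I) u
      = complexDFT (fun p => a p) u + complexDFT (fun p => b p) u * Complex.I := by
  simp only [complexDFT, mul_add, Finset.sum_add_distrib, Finset.sum_mul, mul_assoc]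

section Embedding

variable {μ : ℍ[ℝ]} (hμ : μ * μ = -1)

theorem star_lift_apply (hre : μ.re = 0) (z : ℂ) :
    star (Complex.lift ⟨μ, hμ⟩ z) = Complex.lift ⟨μ, hμ⟩ (starRingEnd ℂ z) := by
  ext <;> simp [hre]

theorem mul_lift_apply_of_anticomm {α : ℍ[ℝ]} (hαμ : α * μ = -(μ * α)) (z : ℂ) :
    α * Complex.lift ⟨μ, hμ⟩ z = Complex.lift ⟨μ, hμ⟩ (starRingEnd ℂ z) * α := by
  simp only [Complex.lift_apply, Complex.liftAux_apply, Complex.conj_re, Complex.conj_im, mul_add,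
    add_mul, mul_smul_comm, smul_mul_assoc, neg_mul, hαμ, Algebra.commutes, neg_smul, smul_neg]

theorem lift_mul_add_mul_mul_lift {α : ℍ[ℝ]} (hαμ : α * μ = -(μ * α)) (x y z w : ℂ) :
    Complex.lift ⟨μ, hμ⟩ x * (Complex.lift ⟨μ, hμ⟩ y + Complex.lift ⟨μ, hμ⟩ z * α)
        * Complex.lift ⟨μ, hμ⟩ w
      = Complex.lift ⟨μ, hμ⟩ (x * y * w)
        + Complex.lift ⟨μ, hμ⟩ (x * z * starRingEnd ℂ w) * α := by
  simp only [map_mul, mul_add, add_mul, mul_assoc, mul_lift_apply_of_anticomm hμ hαμ]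

theorem coe_add_smul_add_smul_add_smul_mul {α : ℍ[ℝ]} (a b c d : ℝ) :
    (a : ℍ[ℝ]) + b • μ + c • α + d • (μ * α)
      = Complex.lift ⟨μ, hμ⟩ (a + b * Complex.I)
        + Complex.lift ⟨μ, hμ⟩ (c + d * Complex.I) * α := by
  simp only [map_add, map_mul, Complex.lift_apply, Complex.liftAux_apply_I]
  simp [add_mul, add_assoc, Quaternion.coe_mul_eq_smul]

theorem qomega_eq_lift_complexOmega (m : ℕ) :
    qomega m μ = Complex.lift ⟨μ, hμ⟩ (complexOmega m) := by
  have hcont : Continuous (Complex.lift ⟨μ, hμ⟩) :=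
    (Complex.lift ⟨μ, hμ⟩).toLinearMap.continuous_of_finiteDimensional
  have hexp : complexOmega m = NormedSpace.exp ((-(2 * Real.pi) / m : ℝ) • Complex.I) := by
    rw [complexOmega, ← Complex.exp_eq_exp_ℂ, ← Complex.exp_neg, Complex.real_smul]
    push_cast
    ring_nf
  rw [hexp, NormedSpace.map_exp _ hcont, map_smul, Complex.lift_apply, Complex.liftAux_apply_I,
    qomega]

theorem qdft_mul_mul_star_qdft {m : ℕ} (hm : m ≠ 0) (hre : μ.re = 0) {α : ℍ[ℝ]}
    (hαμ : α * μ = -(μ * α)) (y z : ℂ) (u s v t : Fin m) :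
    qdft m μ u s * (Complex.lift ⟨μ, hμ⟩ y + Complex.lift ⟨μ, hμ⟩ z * α) * star (qdft m μ v t)
      = (m : ℝ)⁻¹ • (Complex.lift ⟨μ, hμ⟩
            (complexOmega m ^ ((u : ℕ) * s) * y * ((complexOmega m ^ (v : ℕ))⁻¹) ^ (t : ℕ))
          + Complex.lift ⟨μ, hμ⟩
            (complexOmega m ^ ((u : ℕ) * s) * z * (complexOmega m ^ (v : ℕ)) ^ (t : ℕ)) * α) := by
  have hconj : starRingEnd ℂ (complexOmega m ^ (v : ℕ)) = (complexOmega m ^ (v : ℕ))⁻¹ :=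
    (Complex.inv_eq_conj (by
      rw [norm_pow, (isPrimitiveRoot_complexOmega hm).norm'_eq_one hm, one_pow])).symm
  have hsqrt : (Real.sqrt m)⁻¹ * (Real.sqrt m)⁻¹ = (m : ℝ)⁻¹ := by
    rw [← mul_inv, Real.mul_self_sqrt (Nat.cast_nonneg m)]
  simp only [qdft, of_apply, qomega_eq_lift_complexOmega hμ, ← map_pow]
  rw [pow_mul _ (v : ℕ), Quaternion.star_smul, star_lift_apply hμ hre, map_pow (starRingEnd ℂ),
    hconj, smul_mul_assoc, smul_mul_assoc, mul_smul_comm, smul_smul, hsqrt,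
    lift_mul_add_mul_mul_lift hμ hαμ, map_pow, map_inv₀, hconj, inv_inv]

theorem inv_natCast_smul_lift_mul_ite {m : ℕ} (hm : m ≠ 0) (S : ℂ) (c : Prop) [Decidable c] :
    (m : ℝ)⁻¹ • Complex.lift ⟨μ, hμ⟩ (S * if c then (m : ℂ) else 0)
      = Complex.lift ⟨μ, hμ⟩ (if c then S else 0) := by
  split_ifs
  · rw [← map_smul, Complex.real_smul, Complex.ofReal_inv, Complex.ofReal_natCast, mul_left_comm,
      inv_mul_cancel₀ (Nat.cast_ne_zero.mpr hm), mul_one]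
  · simp

end Embedding

theorem kronecker_one_mul_bcirc_mul_kronecker_one_apply {m n₁ n₂ : ℕ}
    (A B : Matrix (Fin m) (Fin m) ℍ[ℝ]) (T : Fin m → Matrix (Fin n₁) (Fin n₂) ℍ[ℝ])
    (u v : Fin m) (i : Fin n₁) (j : Fin n₂) :
    ((A ⊗ₖ (1 : Matrix (Fin n₁) (Fin n₁) ℍ[ℝ])) * bcirc T
        * (B ⊗ₖ (1 : Matrix (Fin n₂) (Fin n₂) ℍ[ℝ]))) (u, i) (v, j)
      = ∑ s, ∑ t, A u s * T (s - t) i j * B t v := by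
  simp only [mul_apply, kroneckerMap_apply, one_apply, bcirc, of_apply, Fintype.sum_prod_type,
    mul_ite, ite_mul, mul_one, mul_zero, zero_mul, Finset.sum_ite_eq, Finset.sum_ite_eq',
    Finset.mem_univ, if_true, Finset.sum_mul]
  exact Finset.sum_comm

theorem bdiagD_mul_flipMat_kronecker_one_apply {m n₁ n₂ : ℕ} (μ : ℍ[ℝ])
    (T : Fin m → Matrix (Fin n₁) (Fin n₂) ℝ) (u v : Fin m) (i : Fin n₁) (j : Fin n₂) :
    (bdiagD μ T * (flipMat m ⊗ₖ (1 : Matrix (Fin n₂) (Fin n₂) ℍ[ℝ]))) (u, i) (v, j)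
      = if ((u : ℕ) + v) % m = 0 then bdiagD μ T (u, i) (u, j) else 0 := by
  simp only [mul_apply, kroneckerMap_apply, one_apply, flipMat, of_apply, Fintype.sum_prod_type,
    mul_ite, mul_one, mul_zero, Finset.sum_ite_eq', Finset.mem_univ, if_true]
  rw [Finset.sum_eq_single u (fun x _ hxu => by simp [bdiagD, Ne.symm hxu]) (by simp)]

section BlockStructure

variable {m n₁ n₂ : ℕ} {μ : ℍ[ℝ]} (hμ : μ * μ = -1)

theorem bdiagD_apply_eq_lift (T : Fin m → Matrix (Fin n₁) (Fin n₂) ℝ) (u v : Fin m)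
    (i : Fin n₁) (j : Fin n₂) :
    bdiagD μ T (u, i) (v, j)
      = Complex.lift ⟨μ, hμ⟩ (if u = v then complexDFT (fun p => (T p i j : ℂ)) u else 0) := by
  have hreal (r : ℝ) : Complex.lift ⟨μ, hμ⟩ r = (r : ℍ[ℝ]) := (Complex.lift ⟨μ, hμ⟩).commutes r
  simp only [bdiagD, complexDFT, of_apply, qomega_eq_lift_complexOmega hμ,
    apply_ite (Complex.lift ⟨μ, hμ⟩), map_zero, map_sum, map_mul, map_pow, hreal]

theorem qdft_kronecker_mul_bcirc_mul_apply [NeZero m] (hre : μ.re = 0) {α : ℍ[ℝ]}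
    (hαμ : α * μ = -(μ * α)) (T : Fin m → Matrix (Fin n₁) (Fin n₂) ℍ[ℝ]) (i : Fin n₁)
    (j : Fin n₂) (g₀ g₂ : Fin m → ℂ)
    (hT : ∀ t, T t i j = Complex.lift ⟨μ, hμ⟩ (g₀ t) + Complex.lift ⟨μ, hμ⟩ (g₂ t) * α)
    (u v : Fin m) :
    ((qdft m μ ⊗ₖ (1 : Matrix (Fin n₁) (Fin n₁) ℍ[ℝ])) * bcirc T
        * ((qdft m μ)ᴴ ⊗ₖ (1 : Matrix (Fin n₂) (Fin n₂) ℍ[ℝ]))) (u, i) (v, j)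
      = Complex.lift ⟨μ, hμ⟩ (if u = v then complexDFT g₀ u else 0)
        + Complex.lift ⟨μ, hμ⟩ (if m ∣ (u : ℕ) + v then complexDFT g₂ u else 0) * α := by
  have hρ := isPrimitiveRoot_complexOmega (NeZero.ne m)
  rw [kronecker_one_mul_bcirc_mul_kronecker_one_apply]
  simp only [conjTranspose_apply, hT, qdft_mul_mul_star_qdft hμ (NeZero.ne m) hre hαμ,
    ← Finset.smul_sum, Finset.sum_add_distrib, ← Finset.sum_mul, ← map_sum,
    sum_sum_pow_mul_sub_mul_pow hρ.pow_eq_one, hρ.sum_fin_pow_mul_inv_pow, hρ.sum_fin_pow_mul_pow,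
    smul_add, ← smul_mul_assoc, inv_natCast_smul_lift_mul_ite hμ (NeZero.ne m), complexDFT]

end BlockStructure

/-- for a quaternion tensor with frontal slices
`T_t = T⁽⁰⁾_t + T⁽¹⁾_t μ + T⁽²⁾_t α + T⁽³⁾_t β` in a three-axis system `(μ, α, β)`,
`(F_μ ⊗ I)·bcirc(T)·(F_μᴴ ⊗ I) = Bdiag(D⁽⁰⁾) + Bdiag(D⁽¹⁾)μ + Bdiag(D⁽²⁾)Zα + Bdiag(D⁽³⁾)Zβ`
where `Z = A ⊗ I` with `A` the flip permutation matrix. -/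
theorem qdft_block_structure_quaternion_bcirc (m n₁ n₂ : ℕ) (hm : 1 ≤ m)
    (μ α β : ℍ[ℝ]) (h : ThreeAxis μ α β)
    (T0 T1 T2 T3 : Fin m → Matrix (Fin n₁) (Fin n₂) ℝ)
    (T : Fin m → Matrix (Fin n₁) (Fin n₂) ℍ[ℝ])
    (hT : ∀ t, T t = Matrix.of fun i j =>
      ((T0 t i j : ℝ) : ℍ[ℝ]) + (T1 t i j) • μ + (T2 t i j) • α + (T3 t i j) • β)
    (Z : Matrix (Fin m × Fin n₂) (Fin m × Fin n₂) ℍ[ℝ])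
    (hZ : Z = flipMat m ⊗ₖ (1 : Matrix (Fin n₂) (Fin n₂) ℍ[ℝ])) :
    (qdft m μ ⊗ₖ (1 : Matrix (Fin n₁) (Fin n₁) ℍ[ℝ]))
        * bcirc T
        * ((qdft m μ)ᴴ ⊗ₖ (1 : Matrix (Fin n₂) (Fin n₂) ℍ[ℝ])) =
      bdiagD μ T0 + mulRight (bdiagD μ T1) μ
        + mulRight (bdiagD μ T2 * Z) α + mulRight (bdiagD μ T3 * Z) β := by
  obtain ⟨hre, hnorm, hαre, -, horth, rfl⟩ := h
  have hμ := Quaternion.mul_self_eq_neg_one hre hnorm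
  have hαμ := Quaternion.mul_eq_neg_mul_of_dotQ_eq_zero hre hαre horth
  have : NeZero m := ⟨by omega⟩
  refine Matrix.ext fun ⟨u, i⟩ ⟨v, j⟩ => ?_
  rw [qdft_kronecker_mul_bcirc_mul_apply hμ hre hαμ T i j
    (fun t => T0 t i j + T1 t i j * Complex.I) (fun t => T2 t i j + T3 t i j * Complex.I)
    (fun t => by rw [hT, of_apply, coe_add_smul_add_smul_add_smul_mul hμ]) u v]
  simp only [Matrix.add_apply, mulRight, of_apply, hZ, bdiagD_mul_flipMat_kronecker_one_apply,
    bdiagD_apply_eq_lift hμ, ← Nat.dvd_iff_mod_eq_zero]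
  split_ifs <;> simp only [complexDFT_ofReal_add_ofReal_mul_I, map_add, map_mul, map_zero,
    Complex.lift_apply, Complex.liftAux_apply_I, zero_mul, add_zero, zero_add, add_mul, mul_assoc,
    add_assoc]
end
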